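/- For all indices 1 ≤ i, j ≤ ℓ, the operators K_i and F_j on F satisfy the quantum group relation K_i ∘ F_j ∘ K_i^{−1} = q_i^{−a_{ij}}·F_j, as an identity of ℂ(s)-linear endomorphisms of F. -/

import Mathlib

open MvPolynomial Finset

set_option synthInstance.maxHeartbeats 1000000
set_option maxHeartbeats 1000000

noncomputable section

/-- The base field `ℂ(s)`. -/
abbrev K0 := RatFunc ℂ

/-- The variables. -/
abbrev Var (ℓ : ℕ) (m l : Fin ℓ → ℕ) := ((i : Fin ℓ) × Fin (m i)) ⊕ ((i : Fin ℓ) × Fin (l i))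

/-- The rational function field over `ℂ(s)` in the given variables. -/
abbrev FF (ℓ : ℕ) (m l : Fin ℓ → ℕ) := FractionRing (MvPolynomial (Var ℓ m l) K0)

variable (ℓ : ℕ) (m l : Fin ℓ → ℕ) (d : Fin ℓ → ℕ) (a : Fin ℓ → Fin ℓ → ℤ)

def cstHom : K0 →+* FF ℓ m l :=
  (algebraMap (MvPolynomial (Var ℓ m l) K0) (FF ℓ m l)).comp
    (C : K0 →+* MvPolynomial (Var ℓ m l) K0)

def cst (c : K0) : FF ℓ m l := cstHom ℓ m l c

/-- The variable `V_{i,k}`. -/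
def V (i : Fin ℓ) (k : Fin (m i)) : FF ℓ m l :=
  algebraMap (MvPolynomial (Var ℓ m l) K0) (FF ℓ m l) (X (Sum.inl ⟨i, k⟩))

/-- The variable `W_{i,t}`. -/
def W (i : Fin ℓ) (t : Fin (l i)) : FF ℓ m l :=
  algebraMap (MvPolynomial (Var ℓ m l) K0) (FF ℓ m l) (X (Sum.inr ⟨i, t⟩))

/-- `s ∈ ℂ(s)`. -/
def sElt : K0 := RatFunc.X

/-- `q = s²`. -/
def qElt : K0 := RatFunc.X ^ 2

/-- `q^e` for an integer exponent `e`. -/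
def qz (e : ℤ) : K0 := qElt ^ e

/-- `q_i^e = q^{d_i·e}`. -/
def qiz (i : Fin ℓ) (e : ℤ) : K0 := qElt ^ ((d i : ℤ) * e)

/-- `q_i − q_i⁻¹`. -/
def qdiff (i : Fin ℓ) : K0 := qiz ℓ d i 1 - qiz ℓ d i (-1)

/-- `c_i = s^{Σ_j d_j·m_j·a_{ji}}`. -/
def cElt (i : Fin ℓ) : K0 := sElt ^ (∑ j : Fin ℓ, (d j : ℤ) * (m j : ℤ) * a j i)

/-- The algebra automorphism of the polynomial ring rescaling the variable `w` by the
nonzero constant `c` and fixing all other variables. -/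
def scalePoly (c : K0) (hc : c ≠ 0) (w : Var ℓ m l) :
    MvPolynomial (Var ℓ m l) K0 ≃ₐ[K0] MvPolynomial (Var ℓ m l) K0 :=
  AlgEquiv.ofAlgHom
    (aeval (fun j => if j = w then MvPolynomial.C c * X j else X j))
    (aeval (fun j => if j = w then MvPolynomial.C c⁻¹ * X j else X j))
    (by
      apply MvPolynomial.algHom_ext; intro j
      by_cases h : j = w <;>
        simp [h, ← mul_assoc, ← C_mul, mul_inv_cancel₀ hc, inv_mul_cancel₀ hc])
    (by
      apply MvPolynomial.algHom_ext; intro j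
      by_cases h : j = w <;>
        simp [h, ← mul_assoc, ← C_mul, mul_inv_cancel₀ hc, inv_mul_cancel₀ hc])

/-- The induced automorphism of `F`. -/
def scaleField (c : K0) (hc : c ≠ 0) (w : Var ℓ m l) : FF ℓ m l ≃+* FF ℓ m l :=
  IsFractionRing.ringEquivOfRingEquiv (scalePoly ℓ m l c hc w).toRingEquiv

/-- `u_{i,k}` : the automorphism `V_{i,k} ↦ q^{d_i}·V_{i,k}`. -/
def uik (i : Fin ℓ) (k : Fin (m i)) : FF ℓ m l ≃+* FF ℓ m l :=
  scaleField ℓ m l (qElt ^ (d i)) (pow_ne_zero _ (pow_ne_zero _ RatFunc.X_ne_zero))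
    (Sum.inl ⟨i, k⟩)

/-- The field `ℂ(s)({W_{i,t}})` of rational functions in the `W`-variables only:
the coefficient field for the polynomials `R_i^{(±)}`. -/
abbrev WField := FractionRing (MvPolynomial ((i : Fin ℓ) × Fin (l i)) K0)

/-- `W_{i,t}` as an element of `ℂ(s)({W_{i,t}})`. -/
def Wsmall (i : Fin ℓ) (t : Fin (l i)) : WField ℓ l :=
  algebraMap (MvPolynomial ((i : Fin ℓ) × Fin (l i)) K0) (WField ℓ l) (X ⟨i, t⟩)

/-- The natural embedding `ℂ(s)({W_{i,t}}) ↪ F`. -/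
def wEmb : WField ℓ l →+* FF ℓ m l :=
  IsFractionRing.lift (g :=
    ((algebraMap (MvPolynomial (Var ℓ m l) K0) (FF ℓ m l)).comp
      (rename (Sum.inr : ((i : Fin ℓ) × Fin (l i)) → Var ℓ m l)).toRingHom))
    ((IsFractionRing.injective (MvPolynomial (Var ℓ m l) K0) (FF ℓ m l)).comp
      (rename_injective _ Sum.inr_injective))

/-- Evaluation of a polynomial with coefficients in `ℂ(s)({W_{i,t}})` at a point of `F`. -/
def Rval (P : Polynomial (WField ℓ l)) (x : FF ℓ m l) : FF ℓ m l :=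
  Polynomial.eval₂ (wEmb ℓ m l) x P

/-- The element `K_i = c_i·Π_t W_{i,t}^{−1}·Π_{j,p} V_{j,p}^{a_{ji}}` of `F`. -/
def Kelt (i : Fin ℓ) : FF ℓ m l :=
  cst ℓ m l (cElt ℓ m d a i) * (∏ t : Fin (l i), (W ℓ m l i t)⁻¹) *
    ∏ j : Fin ℓ, ∏ p : Fin (m j), (V ℓ m l j p) ^ (a j i)

/-- Multiplication by `K_i`. -/
def Kop (i : Fin ℓ) : FF ℓ m l → FF ℓ m l := fun f => Kelt ℓ m l d a i * f

/-- Multiplication by `K_i⁻¹`. -/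
def Kinv (i : Fin ℓ) : FF ℓ m l → FF ℓ m l := fun f => (Kelt ℓ m l d a i)⁻¹ * f

/-- The operator `F_i`. -/
def Fop (Rm : (i : Fin ℓ) → Polynomial (WField ℓ l)) (i : Fin ℓ) :
    FF ℓ m l → FF ℓ m l := fun f =>
  cst ℓ m l (-(qiz ℓ d i (-(2 * (m i : ℤ))) / qdiff ℓ d i)) * (∏ p : Fin (m i), V ℓ m l i p) *
    (∏ j ∈ univ.filter (fun j => j < i), ∏ p : Fin (m j), (V ℓ m l j p) ^ (a j i)) *
    ∑ k : Fin (m i),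
      ((V ℓ m l i k) ^ (-2 : ℤ)
          * Rval ℓ m l (Rm i) (cst ℓ m l (qiz ℓ d i 2) * (V ℓ m l i k) ^ 2) *
        (∏ j ∈ univ.filter (fun j => j < i), ∏ r ∈ range (-(a j i)).toNat, ∏ p : Fin (m j),
          (cst ℓ m l (qiz ℓ d i 2) * (V ℓ m l i k) ^ 2
            - cst ℓ m l (qz ((d j : ℤ) * (a j i + 2 * ((r : ℤ) + 1)))) * (V ℓ m l j p) ^ 2)) /
        (∏ p ∈ univ.erase k, ((V ℓ m l i k) ^ 2 - (V ℓ m l i p) ^ 2))) *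
      (uik ℓ m l d i k) f

/-!
`F_j` has the shape `f ↦ A · Σ_k B_k · u_{j,k}(f)` with coefficients in `F`, and `K_i` is a
monomial on which each `u_{j,k}` acts by the scalar `q^{d_j a_{ji}}`, which equals `q_i^{a_{ij}}`
by symmetrizability. Hence `K_i · F_j(K_i⁻¹ f) = q_i^{-a_{ij}} · F_j(f)`.
-/

theorem mul_sum_map_inv_mul_of_map_eq_mul {R ι G : Type*} [Field R] [FunLike G R R]
    [RingHomClass G R R] (s : Finset ι) (σ : ι → G) {x c : R} (hx : x ≠ 0)
    (hσ : ∀ k ∈ s, σ k x = c * x) (A : R) (B : ι → R) (f : R) :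
    x * (A * ∑ k ∈ s, B k * σ k (x⁻¹ * f)) = c⁻¹ * (A * ∑ k ∈ s, B k * σ k f) := by
  have hterm : ∀ k ∈ s, B k * σ k (x⁻¹ * f) = x⁻¹ * c⁻¹ * (B k * σ k f) := by
    intro k hk
    rw [map_mul, map_inv₀, hσ k hk, mul_inv]
    ring
  rw [sum_congr rfl hterm, ← mul_sum]
  calc x * (A * (x⁻¹ * c⁻¹ * ∑ k ∈ s, B k * σ k f))
      = x * x⁻¹ * (c⁻¹ * (A * ∑ k ∈ s, B k * σ k f)) := by ring
    _ = c⁻¹ * (A * ∑ k ∈ s, B k * σ k f) := by rw [mul_inv_cancel₀ hx, one_mul]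

lemma algebraMap_FF_injective :
    Function.Injective (algebraMap (MvPolynomial (Var ℓ m l) K0) (FF ℓ m l)) :=
  IsFractionRing.injective _ _

lemma V_ne_zero (i : Fin ℓ) (k : Fin (m i)) : V ℓ m l i k ≠ 0 :=
  (map_ne_zero_iff _ (algebraMap_FF_injective ℓ m l)).mpr (X_ne_zero _)

lemma W_ne_zero (i : Fin ℓ) (t : Fin (l i)) : W ℓ m l i t ≠ 0 :=
  (map_ne_zero_iff _ (algebraMap_FF_injective ℓ m l)).mpr (X_ne_zero _)

lemma cst_ne_zero {x : K0} (hx : x ≠ 0) : cst ℓ m l x ≠ 0 :=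
  (map_ne_zero_iff _ (cstHom ℓ m l).injective).mpr hx

lemma Kelt_ne_zero (i : Fin ℓ) : Kelt ℓ m l d a i ≠ 0 := by
  refine mul_ne_zero (mul_ne_zero (cst_ne_zero ℓ m l ?_) ?_) ?_
  · exact zpow_ne_zero _ RatFunc.X_ne_zero
  · exact prod_ne_zero_iff.mpr fun t _ => inv_ne_zero (W_ne_zero ℓ m l i t)
  · exact prod_ne_zero_iff.mpr fun j _ =>
      prod_ne_zero_iff.mpr fun p _ => zpow_ne_zero _ (V_ne_zero ℓ m l j p)

lemma cst_pow_zpow (n : ℕ) (e : ℤ) : cst ℓ m l (qElt ^ n) ^ e = cst ℓ m l (qz (n * e)) := by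
  simp only [cst, ← map_zpow₀]
  rw [qz, zpow_mul, zpow_natCast]

lemma qiz_neg (i : Fin ℓ) (e : ℤ) : qiz ℓ d i (-e) = (qz (d i * e))⁻¹ := by
  rw [qiz, qz, mul_neg, zpow_neg]

lemma scaleField_algebraMap (c : K0) (hc : c ≠ 0) (w : Var ℓ m l)
    (p : MvPolynomial (Var ℓ m l) K0) :
    scaleField ℓ m l c hc w (algebraMap _ (FF ℓ m l) p)
      = algebraMap _ (FF ℓ m l) (scalePoly ℓ m l c hc w p) := by
  unfold scaleField IsFractionRing.ringEquivOfRingEquiv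
  exact IsLocalization.ringEquivOfRingEquiv_eq _ p

lemma scaleField_X (c : K0) (hc : c ≠ 0) (w v : Var ℓ m l) :
    scaleField ℓ m l c hc w (algebraMap (MvPolynomial (Var ℓ m l) K0) (FF ℓ m l) (X v))
      = (if v = w then cst ℓ m l c else 1) *
          algebraMap (MvPolynomial (Var ℓ m l) K0) (FF ℓ m l) (X v) := by
  rw [scaleField_algebraMap]
  simp only [scalePoly, AlgEquiv.ofAlgHom_apply, aeval_X]
  split_ifs <;> simp [cst, cstHom]

lemma scaleField_cst (c : K0) (hc : c ≠ 0) (w : Var ℓ m l) (x : K0) :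
    scaleField ℓ m l c hc w (cst ℓ m l x) = cst ℓ m l x := by
  rw [cst, cstHom, RingHom.comp_apply, scaleField_algebraMap]
  simp [scalePoly]

lemma uik_V_zpow (j : Fin ℓ) (k : Fin (m j)) (x : (i : Fin ℓ) × Fin (m i)) (e : ℤ) :
    uik ℓ m l d j k (V ℓ m l x.1 x.2 ^ e)
      = (if x = ⟨j, k⟩ then cst ℓ m l (qz (d j * e)) else 1) * V ℓ m l x.1 x.2 ^ e := by
  rw [map_zpow₀, uik, V, scaleField_X, mul_zpow]
  by_cases h : x = ⟨j, k⟩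
  · subst h
    simp [cst_pow_zpow]
  · simp [h]

lemma uik_prod_V_zpow (j : Fin ℓ) (k : Fin (m j)) (e : Fin ℓ → ℤ) :
    uik ℓ m l d j k (∏ i, ∏ p : Fin (m i), V ℓ m l i p ^ e i)
      = cst ℓ m l (qz (d j * e j)) * ∏ i, ∏ p : Fin (m i), V ℓ m l i p ^ e i := by
  rw [prod_sigma' univ (fun _ => univ) (fun i p => V ℓ m l i p ^ e i), map_prod]
  simp only [uik_V_zpow, prod_mul_distrib, prod_ite_eq']
  simp

lemma uik_W (j : Fin ℓ) (k : Fin (m j)) (i : Fin ℓ) (t : Fin (l i)) :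
    uik ℓ m l d j k (W ℓ m l i t) = W ℓ m l i t := by
  simp [uik, W, scaleField_X]

lemma uik_Kelt (i j : Fin ℓ) (k : Fin (m j)) :
    uik ℓ m l d j k (Kelt ℓ m l d a i) = cst ℓ m l (qz (d j * a j i)) * Kelt ℓ m l d a i := by
  rw [Kelt, map_mul, map_mul, uik_prod_V_zpow, map_prod]
  simp only [map_inv₀, uik_W]
  rw [uik, scaleField_cst]
  ring

theorem qgroup_KFK_general
    (ℓ : ℕ)
    (a : Fin ℓ → Fin ℓ → ℤ)
    (d : Fin ℓ → ℕ)
    (hsym : ∀ i j, (d i : ℤ) * a i j = (d j : ℤ) * a j i)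
    (m : Fin ℓ → ℕ)
    (l : Fin ℓ → ℕ)
    (Rm : (i : Fin ℓ) → Polynomial (WField ℓ l))
    (i j : Fin ℓ) :
    Kop ℓ m l d a i ∘ Fop ℓ m l d a Rm j ∘ Kinv ℓ m l d a i
      = cst ℓ m l (qiz ℓ d i (-(a i j))) • Fop ℓ m l d a Rm j := by
  have hscalar : cst ℓ m l (qiz ℓ d i (-(a i j))) = (cst ℓ m l (qz (d j * a j i)))⁻¹ := by
    rw [qiz_neg, hsym, cst, cst, map_inv₀]
  funext f
  simp only [Function.comp_apply, Pi.smul_apply, smul_eq_mul, Kop, Kinv, Fop, hscalar]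
  exact mul_sum_map_inv_mul_of_map_eq_mul _ _ (Kelt_ne_zero ℓ m l d a i)
    (fun k _ => uik_Kelt ℓ m l d a i j k) _ _ f

/-- `K_i ∘ F_j ∘ K_i⁻¹ = q_i^{−a_{ij}}·F_j`. -/
theorem qgroup_KFK
    (ℓ : ℕ) (hℓ : 1 ≤ ℓ)
    (a : Fin ℓ → Fin ℓ → ℤ) (ha : ∀ i, a i i = 2) (ha' : ∀ i j, i ≠ j → a i j ≤ 0)
    (d : Fin ℓ → ℕ) (hd : ∀ i, 0 < d i)
    (hsym : ∀ i j, (d i : ℤ) * a i j = (d j : ℤ) * a j i)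
    (m : Fin ℓ → ℕ) (hm : ∀ i, 0 < m i)
    (l : Fin ℓ → ℕ) (hln : ∀ i, (l i : ℤ) = ∑ j, (m j : ℤ) * a j i)
    (Rp Rm : (i : Fin ℓ) → Polynomial (WField ℓ l))
    (hR : ∀ i, Rp i * Rm i =
      ∏ t : Fin (l i), (Polynomial.X * Polynomial.C (Wsmall ℓ l i t)⁻¹
        - Polynomial.C (Wsmall ℓ l i t)))
    (i j : Fin ℓ) :
    Kop ℓ m l d a i ∘ Fop ℓ m l d a Rm j ∘ Kinv ℓ m l d a i
      = cst ℓ m l (qiz ℓ d i (-(a i j))) • Fop ℓ m l d a Rm j :=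
  qgroup_KFK_general ℓ a d hsym m l Rm i j
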